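/- Fix m ≥ 0 and write R(A) := √(A/(4π)). Then, as A → ∞, Vol_m(R(A)) = (1/2)A − π log A + ( V_m + π(1 + log π) ) − 8π^(3/2) m A^(−1/2) − 3π² A^(−1) + 16π^(5/2) m A^(−3/2) + O(A^(−2)); that is, there exist C, A₀ > 0 such that for all A ≥ A₀ the difference between the two sides is at most C A^(−2) in absolute value. -/

import Mathlib

open Real MeasureTheory Filter

/-- Volume of the centered coordinate ball of radius `R` in hyperbolic space. -/
noncomputable def hypVol (R : ℝ) : ℝ :=
  4 * π * ∫ s in (0:ℝ)..R, s ^ 2 / Real.sqrt (1 + s ^ 2)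

/-- Volume of the centered coordinate ball of radius `R` in
Schwarzschild-anti-deSitter of mass `m`. -/
noncomputable def sAdSVol (m R : ℝ) : ℝ :=
  4 * π * ∫ s in (2 * m)..R, s ^ 2 / Real.sqrt (1 + s ^ 2 - 2 * m / s)

/-- The renormalized volume `V_m = lim_{R→∞} (Vol_m(R) - Vol₀(R))` of
Schwarzschild-anti-deSitter of mass `m`. -/
noncomputable def renormVol (m : ℝ) : ℝ :=
  limUnder atTop (fun R => sAdSVol m R - hypVol R)

open Set Topology Asymptotics

/-!
The flat density `s² / √(1 + s²)` has the explicit primitive `(s √(1 + s²) - arsinh s) / 2`,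
whose expansion at infinity is elementary. Writing `u = 2m / (s (1 + s²))`, the sAdS density is
the flat one times `(1 - u)^(-1/2)`, so the difference `D` of the two densities is
`m s (1 + s²)^(-3/2) + O(s⁻⁵)`. In particular `D` is integrable on `(2m, ∞)`, which identifies
the renormalized volume and gives
`sAdSVol m R = hypVol R + V_m - 4π ∫_R^∞ D = hypVol R + V_m - 4π m / √(1 + R²) + O(R⁻⁴)`.
Expanding in `R` and substituting `A = 4πR²` gives the claim.
-/

lemma isBigO_rpow_neg_of_abs_le {f : ℝ → ℝ} {c : ℝ} {n : ℕ}
    (h : ∀ᶠ R in atTop, |f R| ≤ c / R ^ n) : f =O[atTop] fun R => R ^ (-(n : ℝ)) := by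
  refine IsBigO.of_bound c ?_
  filter_upwards [h, eventually_gt_atTop 0] with R hfR hR
  rwa [Real.norm_eq_abs, Real.norm_of_nonneg (rpow_nonneg hR.le _), rpow_neg hR.le,
    rpow_natCast, ← div_eq_mul_inv]

lemma isBigO_rpow_atTop_of_le {a b : ℝ} (hab : a ≤ b) :
    (fun x : ℝ => x ^ a) =O[atTop] fun x => x ^ b := by
  refine IsBigO.of_bound 1 ?_
  filter_upwards [eventually_ge_atTop 1] with x hx
  have hx0 : 0 ≤ x := zero_le_one.trans hx
  rw [one_mul, Real.norm_of_nonneg (rpow_nonneg hx0 _),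
    Real.norm_of_nonneg (rpow_nonneg hx0 _)]
  exact rpow_le_rpow_of_exponent_le hx hab

theorem isBigO_integral_Ioi_of_isBigO_rpow {E : Type*} [NormedAddCommGroup E] [NormedSpace ℝ E]
    {f : ℝ → E} {a : ℝ} (ha : 1 < a) (hf : f =O[atTop] fun s => s ^ (-a)) :
    (fun R => ∫ s in Ioi R, f s) =O[atTop] fun R => R ^ (1 - a) := by
  obtain ⟨c, hc⟩ := hf.bound
  obtain ⟨s₀, hs₀⟩ := eventually_atTop.1 hc
  refine IsBigO.of_bound (c / (a - 1)) ?_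
  filter_upwards [eventually_ge_atTop s₀, eventually_gt_atTop 0] with R hRs₀ hR
  have hbound : ∀ᵐ s ∂volume.restrict (Ioi R), ‖f s‖ ≤ c * s ^ (-a) := by
    refine (ae_restrict_iff' measurableSet_Ioi).2 (ae_of_all _ fun s hs => ?_)
    have hs0 : 0 < s := hR.trans hs
    simpa [Real.norm_of_nonneg (rpow_nonneg hs0.le _)] using hs₀ s (hRs₀.trans hs.le)
  calc ‖∫ s in Ioi R, f s‖ ≤ ∫ s in Ioi R, c * s ^ (-a) :=
        norm_integral_le_of_norm_le
          ((integrableOn_Ioi_rpow_of_lt (by linarith) hR).const_mul c) hbound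
    _ = c / (a - 1) * ‖R ^ (1 - a)‖ := by
        rw [integral_const_mul, integral_Ioi_rpow_of_lt (by linarith) hR,
          Real.norm_of_nonneg (rpow_nonneg hR.le _), neg_add_eq_sub,
          show 1 - a = -(a - 1) by ring, div_neg, neg_div, neg_neg]
        ring

lemma exists_bound_of_isBigO_rpow {f : ℝ → ℝ} {a : ℝ} (h : f =O[atTop] fun x => x ^ a) :
    ∃ C > (0:ℝ), ∃ x₀ > (0:ℝ), ∀ x ≥ x₀, |f x| ≤ C * x ^ a := by
  obtain ⟨C, hC, hCf⟩ := h.exists_pos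
  obtain ⟨x₀, hx₀⟩ := eventually_atTop.1 (hCf.bound.and (eventually_gt_atTop 0))
  refine ⟨C, hC, max x₀ 1, by positivity, fun x hx => ?_⟩
  obtain ⟨hbound, hx0⟩ := hx₀ x (le_of_max_le_left hx)
  rwa [Real.norm_eq_abs, Real.norm_of_nonneg (rpow_nonneg hx0.le _)] at hbound

lemma abs_sqrt_one_add_sub_le {x : ℝ} (h0 : 0 ≤ x) :
    |√(1 + x) - (1 + x / 2 - x ^ 2 / 8)| ≤ x ^ 3 := by
  have hw := sq_sqrt (by linarith : (0:ℝ) ≤ 1 + x)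
  rw [abs_le]
  constructor <;> nlinarith [sq_nonneg (√(1 + x) - (1 + x / 2 - x ^ 2 / 8)), sqrt_nonneg (1 + x),
    sq_nonneg x, sq_nonneg (x ^ 2), pow_nonneg h0 3]

lemma abs_inv_sqrt_one_add_sub_le {x : ℝ} (hx : -(1 / 2) ≤ x) :
    |(√(1 + x))⁻¹ - (1 - x / 2)| ≤ x ^ 2 := by
  have hw0 : 0 < √(1 + x) := sqrt_pos.2 (by linarith)
  have hw := sq_sqrt (by linarith : (0:ℝ) ≤ 1 + x)
  rw [abs_le, ← one_div, sub_le_iff_le_add, le_sub_iff_add_le, div_le_iff₀ hw0,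
    le_div_iff₀ hw0]
  constructor <;> nlinarith [sq_nonneg x, sq_nonneg (x ^ 2), sq_nonneg (1 + x / 2 - x ^ 2),
    mul_self_nonneg (√(1 + x) - 1)]

lemma abs_log_sub_sub_one_le {t : ℝ} (ht : 1 ≤ t) : |log t - (t - 1)| ≤ (t - 1) ^ 2 := by
  have ht0 : 0 < t := by linarith
  have hlow := one_sub_inv_le_log_of_pos ht0
  have hinv : (t - 1) - (t - 1) ^ 2 ≤ 1 - t⁻¹ := by
    have hcube : 1 - t⁻¹ - ((t - 1) - (t - 1) ^ 2) = (t - 1) ^ 3 / t := by field_simp; ring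
    have : 0 ≤ (t - 1) ^ 3 / t := div_nonneg (pow_nonneg (sub_nonneg.2 ht) 3) ht0.le
    linarith
  rw [abs_le]
  constructor <;> nlinarith [log_le_sub_one_of_pos ht0]

lemma sqrt_one_add_sq_eq_mul {R : ℝ} (hR : 0 < R) :
    √(1 + R ^ 2) = R * √(1 + (R ^ 2)⁻¹) := by
  rw [← sqrt_sq hR.le, ← sqrt_mul (sq_nonneg R), sqrt_sq hR.le]
  congr 1
  field_simp
  ring

lemma isBigO_mul_sqrt_one_add_sq :
    (fun R => R * √(1 + R ^ 2) - (R ^ 2 + 1 / 2 - 1 / (8 * R ^ 2))) =O[atTop]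
      fun R => R ^ (-4 : ℝ) := by
  refine isBigO_rpow_neg_of_abs_le (c := 1) ?_
  filter_upwards [eventually_gt_atTop 0] with R hR
  have hx := abs_sqrt_one_add_sub_le (inv_nonneg.2 (sq_nonneg R))
  have hexp : R * √(1 + R ^ 2) - (R ^ 2 + 1 / 2 - 1 / (8 * R ^ 2)) =
      R ^ 2 * (√(1 + (R ^ 2)⁻¹) - (1 + (R ^ 2)⁻¹ / 2 - ((R ^ 2)⁻¹) ^ 2 / 8)) := by
    rw [sqrt_one_add_sq_eq_mul hR]
    field_simp
  calc |R * √(1 + R ^ 2) - (R ^ 2 + 1 / 2 - 1 / (8 * R ^ 2))|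
      ≤ R ^ 2 * ((R ^ 2)⁻¹) ^ 3 := by
        rw [hexp, abs_mul, abs_of_nonneg (sq_nonneg R)]
        exact mul_le_mul_of_nonneg_left hx (sq_nonneg R)
    _ = 1 / R ^ 4 := by field_simp

lemma isBigO_arsinh_sub_log :
    (fun R => arsinh R - (log (2 * R) + 1 / (4 * R ^ 2))) =O[atTop] fun R => R ^ (-4 : ℝ) := by
  refine isBigO_rpow_neg_of_abs_le (c := 1) ?_
  filter_upwards [eventually_ge_atTop 1] with R hR1
  have hR : 0 < R := one_pos.trans_le hR1
  set x := (R ^ 2)⁻¹ with hx_def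
  have hx0 : 0 ≤ x := inv_nonneg.2 (sq_nonneg R)
  have hx1 : x ≤ 1 := inv_le_one_of_one_le₀ (one_le_pow₀ hR1)
  set t := (1 + √(1 + x)) / 2 with ht_def
  have hsqrt_ge : 1 ≤ √(1 + x) := one_le_sqrt.2 (by linarith)
  have hsqrt_le : √(1 + x) ≤ 1 + x / 2 := sqrt_le_iff.2 ⟨by linarith, by nlinarith⟩
  have hsqrt := abs_sqrt_one_add_sub_le hx0
  have hlog := abs_log_sub_sub_one_le (show 1 ≤ t by linarith)
  have harsinh : arsinh R = log (2 * R) + log t := by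
    rw [arsinh, sqrt_one_add_sq_eq_mul hR, ← log_mul (by positivity) (by positivity)]
    congr 1
    ring
  have hx2 : x ^ 2 = 1 / R ^ 4 := by rw [hx_def]; field_simp
  have hx4 : 1 / (4 * R ^ 2) = x / 4 := by rw [hx_def]; field_simp
  rw [harsinh, hx4, ← hx2, show log (2 * R) + log t - (log (2 * R) + x / 4)
    = (log t - (t - 1)) + (√(1 + x) - (1 + x / 2 - x ^ 2 / 8)) / 2 - x ^ 2 / 16 by ring]
  rw [abs_le] at hsqrt hlog ⊢
  have hx3 : x ^ 3 ≤ x ^ 2 := pow_le_pow_of_le_one hx0 hx1 (by norm_num)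
  constructor <;> nlinarith

lemma isBigO_inv_sqrt_one_add_sq :
    (fun R => (√(1 + R ^ 2))⁻¹ - (1 / R - 1 / (2 * R ^ 3))) =O[atTop]
      fun R => R ^ (-5 : ℝ) := by
  refine isBigO_rpow_neg_of_abs_le (c := 1) ?_
  filter_upwards [eventually_gt_atTop 0] with R hR
  have hx := abs_inv_sqrt_one_add_sub_le (x := (R ^ 2)⁻¹)
    (by linarith [inv_nonneg.2 (sq_nonneg R)])
  have hexp : (√(1 + R ^ 2))⁻¹ - (1 / R - 1 / (2 * R ^ 3)) =
      R⁻¹ * ((√(1 + (R ^ 2)⁻¹))⁻¹ - (1 - (R ^ 2)⁻¹ / 2)) := by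
    rw [sqrt_one_add_sq_eq_mul hR, mul_inv]
    field_simp
  calc |(√(1 + R ^ 2))⁻¹ - (1 / R - 1 / (2 * R ^ 3))|
      ≤ R⁻¹ * ((R ^ 2)⁻¹) ^ 2 := by
        rw [hexp, abs_mul, abs_of_nonneg (inv_nonneg.2 hR.le)]
        exact mul_le_mul_of_nonneg_left hx (inv_nonneg.2 hR.le)
    _ = 1 / R ^ 5 := by field_simp

lemma hasDerivAt_sqrt_one_add_sq (s : ℝ) :
    HasDerivAt (fun t => √(1 + t ^ 2)) (s / √(1 + s ^ 2)) s := by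
  convert ((hasDerivAt_pow 2 s).const_add 1).sqrt (by positivity) using 1
  norm_num
  ring

lemma continuous_sq_div_sqrt_one_add_sq : Continuous fun s : ℝ => s ^ 2 / √(1 + s ^ 2) :=
  (continuous_pow 2).div (by fun_prop) fun s => (sqrt_pos.2 (by positivity)).ne'

lemma hypVol_eq (R : ℝ) : hypVol R = 2 * π * (R * √(1 + R ^ 2) - arsinh R) := by
  have hderiv (s : ℝ) : HasDerivAt (fun t => (t * √(1 + t ^ 2) - arsinh t) / 2)
      (s ^ 2 / √(1 + s ^ 2)) s := by
    refine ((((hasDerivAt_id' s).mul (hasDerivAt_sqrt_one_add_sq s)).sub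
      (hasDerivAt_arsinh s)).div_const 2).congr_deriv ?_
    field_simp
    rw [sq_sqrt (by positivity)]
    ring
  rw [hypVol, intervalIntegral.integral_eq_sub_of_hasDerivAt (fun s _ => hderiv s)
    (continuous_sq_div_sqrt_one_add_sq.intervalIntegrable 0 R)]
  simp only [arsinh_zero]
  ring

noncomputable def sAdSDensityDefect (m s : ℝ) : ℝ :=
  s ^ 2 / √(1 + s ^ 2 - 2 * m / s) - s ^ 2 / √(1 + s ^ 2)

noncomputable def sAdSDensityDefectLeading (m s : ℝ) : ℝ :=
  m * s / ((1 + s ^ 2) * √(1 + s ^ 2))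

noncomputable def sAdSVolApprox (m R : ℝ) : ℝ :=
  2 * π * R ^ 2 + π - 2 * π * log (2 * R) + renormVol m - 4 * π * m / R - 3 * π / (4 * R ^ 2)
    + 2 * π * m / R ^ 3

section SchwarzschildAdS

variable {m : ℝ}

lemma one_add_sq_sub_two_mul_div_pos {s : ℝ} (hm : 0 ≤ m) (hs : 2 * m ≤ s) :
    0 < 1 + s ^ 2 - 2 * m / s := by
  rcases (show 0 ≤ s by linarith).eq_or_lt with rfl | hs0
  · -- `s = 0` forces `m = 0`, and then `2 * m / s = 0`.
    simp
  · nlinarith [div_le_one_of_le₀ hs hs0.le]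

lemma continuousOn_sAdSDensity (hm : 0 ≤ m) :
    ContinuousOn (fun s => s ^ 2 / √(1 + s ^ 2 - 2 * m / s)) (Ici (2 * m)) := by
  have hdiv : ContinuousOn (fun s : ℝ => 2 * m / s) (Ici (2 * m)) := by
    rcases hm.eq_or_lt with rfl | hm
    · simpa using continuousOn_const
    · exact continuousOn_const.div continuousOn_id fun s hs =>
        (show (0:ℝ) < s by linarith [mem_Ici.1 hs]).ne'
  have hradicand : ContinuousOn (fun s => 1 + s ^ 2 - 2 * m / s) (Ici (2 * m)) :=
    (Continuous.continuousOn (by fun_prop)).sub hdiv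
  exact (continuousOn_pow 2).div hradicand.sqrt fun s hs =>
    (sqrt_pos.2 (one_add_sq_sub_two_mul_div_pos hm hs)).ne'

lemma abs_sAdSDensityDefect_sub_leading_le {s : ℝ} (hm : 0 ≤ m) (h2m : 2 * m ≤ s)
    (hs : 1 ≤ s) :
    |sAdSDensityDefect m s - sAdSDensityDefectLeading m s| ≤ 4 * m ^ 2 / s ^ 5 := by
  have hs0 : 0 < s := by linarith
  have hz : 0 < √(1 + s ^ 2) := sqrt_pos.2 (by positivity)
  have hsz : s ≤ √(1 + s ^ 2) := le_sqrt_of_sq_le (by linarith)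
  set u := 2 * m / (s * (1 + s ^ 2)) with hu_def
  have hu : u ≤ 1 / 2 := by
    rw [hu_def, div_le_iff₀ (by positivity)]
    nlinarith
  have hfac : √(1 + s ^ 2 - 2 * m / s) = √(1 + s ^ 2) * √(1 + -u) := by
    rw [← sqrt_mul (by positivity), hu_def]
    congr 1
    field_simp
    ring
  have hexp : sAdSDensityDefect m s - sAdSDensityDefectLeading m s =
      s ^ 2 / √(1 + s ^ 2) * ((√(1 + -u))⁻¹ - (1 - -u / 2)) := by
    rw [sAdSDensityDefect, sAdSDensityDefectLeading, hfac, hu_def]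
    field_simp
    ring
  calc |sAdSDensityDefect m s - sAdSDensityDefectLeading m s|
      ≤ s ^ 2 / √(1 + s ^ 2) * (-u) ^ 2 := by
        rw [hexp, abs_mul, abs_of_nonneg (by positivity)]
        exact mul_le_mul_of_nonneg_left (abs_inv_sqrt_one_add_sub_le (by linarith))
          (by positivity)
    _ = 4 * m ^ 2 / ((1 + s ^ 2) ^ 2 * √(1 + s ^ 2)) := by
        rw [hu_def]
        field_simp
        ring
    _ ≤ 4 * m ^ 2 / s ^ 5 := by
        gcongr
        calc s ^ 5 = (s ^ 2) ^ 2 * s := by ring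
          _ ≤ (1 + s ^ 2) ^ 2 * √(1 + s ^ 2) := by gcongr; linarith

lemma sAdSDensityDefectLeading_nonneg {s : ℝ} (hm : 0 ≤ m) (hs : 0 ≤ s) :
    0 ≤ sAdSDensityDefectLeading m s := by
  unfold sAdSDensityDefectLeading
  positivity

lemma isBigO_sAdSDensityDefect_sub_leading (hm : 0 ≤ m) :
    (fun s => sAdSDensityDefect m s - sAdSDensityDefectLeading m s) =O[atTop]
      fun s => s ^ (-5 : ℝ) := by
  refine isBigO_rpow_neg_of_abs_le (c := 4 * m ^ 2) ?_
  filter_upwards [eventually_ge_atTop (2 * m), eventually_ge_atTop 1] with s h2m hs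
  exact abs_sAdSDensityDefect_sub_leading_le hm h2m hs

lemma isBigO_sAdSDensityDefectLeading (hm : 0 ≤ m) :
    sAdSDensityDefectLeading m =O[atTop] fun s => s ^ (-2 : ℝ) := by
  refine isBigO_rpow_neg_of_abs_le (c := m) ?_
  filter_upwards [eventually_gt_atTop 0] with s hs
  have hsz : s ≤ √(1 + s ^ 2) := le_sqrt_of_sq_le (by linarith)
  rw [abs_of_nonneg (sAdSDensityDefectLeading_nonneg hm hs.le), sAdSDensityDefectLeading]
  calc m * s / ((1 + s ^ 2) * √(1 + s ^ 2)) ≤ m * s / (s ^ 2 * s) := by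
        gcongr
        linarith
    _ = m / s ^ 2 := by field_simp

lemma integrableOn_sAdSDensityDefect (hm : 0 ≤ m) :
    IntegrableOn (sAdSDensityDefect m) (Ioi (2 * m)) := by
  have hO : sAdSDensityDefect m =O[atTop] fun s => s ^ (-2 : ℝ) := by
    simpa using ((isBigO_sAdSDensityDefect_sub_leading hm).trans
      (isBigO_rpow_atTop_of_le (by norm_num))).add (isBigO_sAdSDensityDefectLeading hm)
  have hcont : ContinuousOn (sAdSDensityDefect m) (Ici (2 * m)) :=
    (continuousOn_sAdSDensity hm).sub continuous_sq_div_sqrt_one_add_sq.continuousOn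
  exact (LocallyIntegrableOn.integrableOn_of_isBigO_atTop
    (hcont.locallyIntegrableOn measurableSet_Ici) hO
    (integrableAtFilter_rpow_atTop_iff.2 (by norm_num))).mono_set Ioi_subset_Ici_self

lemma hasDerivAt_neg_div_sqrt_one_add_sq (m s : ℝ) :
    HasDerivAt (fun t => -(m / √(1 + t ^ 2))) (sAdSDensityDefectLeading m s) s := by
  have hz : 0 < √(1 + s ^ 2) := sqrt_pos.2 (by positivity)
  refine ((hasDerivAt_const s m).div (hasDerivAt_sqrt_one_add_sq s) hz.ne').neg.congr_deriv ?_
  rw [sAdSDensityDefectLeading]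
  field_simp
  rw [sq_sqrt (by positivity)]
  ring

lemma tendsto_neg_div_sqrt_one_add_sq (m : ℝ) :
    Tendsto (fun t => -(m / √(1 + t ^ 2))) atTop (𝓝 0) := by
  simpa using (tendsto_const_nhds.div_atTop (tendsto_atTop_mono
    (fun t => le_sqrt_of_sq_le (le_add_of_nonneg_left zero_le_one)) tendsto_id)).neg

lemma integrableOn_sAdSDensityDefectLeading {R : ℝ} (hm : 0 ≤ m) (hR : 0 ≤ R) :
    IntegrableOn (sAdSDensityDefectLeading m) (Ioi R) :=
  integrableOn_Ioi_deriv_of_nonneg' (fun s _ => hasDerivAt_neg_div_sqrt_one_add_sq m s)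
    (fun _ hs => sAdSDensityDefectLeading_nonneg hm (hR.trans (le_of_lt hs)))
    (tendsto_neg_div_sqrt_one_add_sq m)

lemma integral_Ioi_sAdSDensityDefectLeading {R : ℝ} (hm : 0 ≤ m) (hR : 0 ≤ R) :
    ∫ s in Ioi R, sAdSDensityDefectLeading m s = m / √(1 + R ^ 2) := by
  rw [integral_Ioi_of_hasDerivAt_of_nonneg' (fun s _ => hasDerivAt_neg_div_sqrt_one_add_sq m s)
    (fun _ hs => sAdSDensityDefectLeading_nonneg hm (hR.trans (le_of_lt hs)))
    (tendsto_neg_div_sqrt_one_add_sq m)]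
  ring

lemma sAdSVol_sub_hypVol {R : ℝ} (hm : 0 ≤ m) (hR : 2 * m ≤ R) :
    sAdSVol m R - hypVol R = 4 * π * ((∫ s in (2 * m)..R, sAdSDensityDefect m s)
      - ∫ s in (0:ℝ)..(2 * m), s ^ 2 / √(1 + s ^ 2)) := by
  have hflat := continuous_sq_div_sqrt_one_add_sq.intervalIntegrable (μ := volume)
  have hcurved := ((continuousOn_sAdSDensity hm).mono Icc_subset_Ici_self).intervalIntegrable_of_Icc
    (μ := volume) hR
  unfold sAdSDensityDefect
  rw [sAdSVol, hypVol, ← intervalIntegral.integral_add_adjacent_intervals (hflat 0 (2 * m))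
    (hflat (2 * m) R), intervalIntegral.integral_sub hcurved (hflat _ _)]
  ring

lemma tendsto_sAdSVol_sub_hypVol (hm : 0 ≤ m) :
    Tendsto (fun R => sAdSVol m R - hypVol R) atTop (𝓝 (4 * π *
      ((∫ s in Ioi (2 * m), sAdSDensityDefect m s)
        - ∫ s in (0:ℝ)..(2 * m), s ^ 2 / √(1 + s ^ 2)))) := by
  refine (((intervalIntegral_tendsto_integral_Ioi (2 * m) (integrableOn_sAdSDensityDefect hm)
    tendsto_id).sub_const _).const_mul (4 * π)).congr' ?_
  filter_upwards [eventually_ge_atTop (2 * m)] with R hR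
  exact (sAdSVol_sub_hypVol hm hR).symm

lemma sAdSVol_eq_hypVol_add_renormVol {R : ℝ} (hm : 0 ≤ m) (hR : 2 * m ≤ R) :
    sAdSVol m R = hypVol R + renormVol m - 4 * π * ∫ s in Ioi R, sAdSDensityDefect m s := by
  have hint := integrableOn_sAdSDensityDefect hm
  have hsplit : ∫ s in Ioi (2 * m), sAdSDensityDefect m s
      = (∫ s in (2 * m)..R, sAdSDensityDefect m s) + ∫ s in Ioi R, sAdSDensityDefect m s := by
    rw [intervalIntegral.integral_of_le hR, ← setIntegral_union Ioc_disjoint_Ioi_same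
      measurableSet_Ioi (hint.mono_set Ioc_subset_Ioi_self) (hint.mono_set (Ioi_subset_Ioi hR)),
      Ioc_union_Ioi_eq_Ioi hR]
  have hdiff := sAdSVol_sub_hypVol hm hR
  rw [renormVol, (tendsto_sAdSVol_sub_hypVol hm).limUnder_eq, hsplit]
  linarith

lemma isBigO_integral_Ioi_sAdSDensityDefect (hm : 0 ≤ m) :
    (fun R => (∫ s in Ioi R, sAdSDensityDefect m s) - m / √(1 + R ^ 2)) =O[atTop]
      fun R => R ^ (-4 : ℝ) := by
  have h := isBigO_integral_Ioi_of_isBigO_rpow (by norm_num)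
    (isBigO_sAdSDensityDefect_sub_leading hm)
  rw [show (1:ℝ) - 5 = -4 by norm_num] at h
  refine h.congr' ?_ EventuallyEq.rfl
  filter_upwards [eventually_ge_atTop (2 * m), eventually_ge_atTop 0] with R h2m hR
  rw [integral_sub ((integrableOn_sAdSDensityDefect hm).mono_set (Ioi_subset_Ioi h2m))
    (integrableOn_sAdSDensityDefectLeading hm hR), integral_Ioi_sAdSDensityDefectLeading hm hR]

theorem isBigO_sAdSVol_sub_sAdSVolApprox (hm : 0 ≤ m) :
    (fun R => sAdSVol m R - sAdSVolApprox m R) =O[atTop] fun R => R ^ (-4 : ℝ) := by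
  have h := (((isBigO_mul_sqrt_one_add_sq.const_mul_left (2 * π)).sub
    (isBigO_arsinh_sub_log.const_mul_left (2 * π))).sub
    ((isBigO_inv_sqrt_one_add_sq.trans (isBigO_rpow_atTop_of_le (by norm_num))).const_mul_left
      (4 * π * m))).sub ((isBigO_integral_Ioi_sAdSDensityDefect hm).const_mul_left (4 * π))
  refine h.congr' ?_ EventuallyEq.rfl
  filter_upwards [eventually_ge_atTop (2 * m), eventually_gt_atTop 0] with R hR hR0
  rw [sAdSVol_eq_hypVol_add_renormVol hm hR, hypVol_eq, sAdSVolApprox]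
  field_simp
  ring

end SchwarzschildAdS

lemma sAdSVolApprox_sqrt_div_four_pi (m : ℝ) {A : ℝ} (hA : 0 < A) :
    sAdSVolApprox m √(A / (4 * π)) = (1 / 2) * A - π * log A + (renormVol m + π * (1 + log π))
      - 8 * π ^ ((3:ℝ) / 2) * m * A ^ (-(1:ℝ) / 2) - 3 * π ^ 2 * A⁻¹
      + 16 * π ^ ((5:ℝ) / 2) * m * A ^ (-(3:ℝ) / 2) := by
  generalize hr : √(A / (4 * π)) = r
  have hr0 : 0 < r := hr ▸ sqrt_pos.2 (by positivity)
  obtain rfl : A = 4 * π * r ^ 2 := by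
    rw [← hr, sq_sqrt (by positivity)]
    field_simp
  have hπ := sq_sqrt pi_pos.le
  have hsqrtA : √(4 * π * r ^ 2) = 2 * √π * r := by
    rw [show 4 * π * r ^ 2 = (2 * √π * r) ^ 2 by rw [mul_pow, mul_pow, hπ]; ring]
    exact sqrt_sq (by positivity)
  have hlog : log (4 * π * r ^ 2) = 2 * log (2 * r) + log π := by
    rw [show 4 * π * r ^ 2 = (2 * r) ^ 2 * π by ring, log_mul (by positivity) pi_pos.ne', log_pow]
    push_cast
    ring
  simp only [rpow_div_two_eq_sqrt _ hA.le, rpow_div_two_eq_sqrt _ pi_pos.le, rpow_neg_one,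
    rpow_neg_ofNat, rpow_ofNat, zpow_neg, zpow_ofNat, hsqrtA, hlog, sAdSVolApprox]
  field_simp
  rw [hπ]
  ring

lemma rpow_neg_four_sqrt_div_four_pi {A : ℝ} (hA : 0 ≤ A) :
    √(A / (4 * π)) ^ (-4 : ℝ) = 16 * π ^ 2 * A ^ (-(2:ℝ)) := by
  rw [sqrt_eq_rpow, ← rpow_mul (by positivity), div_rpow hA (by positivity),
    show (1 / 2 : ℝ) * -4 = -2 by norm_num, rpow_neg (by positivity : (0:ℝ) ≤ 4 * π),
    rpow_two, div_inv_eq_mul]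
  ring

/-- expansion of the volume of the centered coordinate ball of
boundary area `A` in Schwarzschild-anti-deSitter of mass `m`, with error
`O(A⁻²)` as `A → ∞` for fixed `m ≥ 0`. -/
theorem sAdS_ball_volume_expansion (m : ℝ) (hm : 0 ≤ m) :
    ∃ C > (0:ℝ), ∃ A₀ > (0:ℝ), ∀ A ≥ A₀,
      |sAdSVol m (Real.sqrt (A / (4 * π)))
          - ((1 / 2) * A - π * Real.log A + (renormVol m + π * (1 + Real.log π))
              - 8 * π ^ ((3:ℝ)/2) * m * A ^ (-(1:ℝ)/2)
              - 3 * π ^ 2 * A⁻¹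
              + 16 * π ^ ((5:ℝ)/2) * m * A ^ (-(3:ℝ)/2))|
        ≤ C * A ^ (-(2:ℝ)) := by
  apply exists_bound_of_isBigO_rpow
  have hR : Tendsto (fun A => √(A / (4 * π))) atTop atTop :=
    tendsto_sqrt_atTop.comp (tendsto_id.atTop_div_const (by positivity))
  refine (((isBigO_sAdSVol_sub_sAdSVolApprox hm).comp_tendsto hR).congr' ?_ ?_).trans
    (isBigO_const_mul_self (16 * π ^ 2) _ atTop)
  · filter_upwards [eventually_gt_atTop 0] with A hA
    simp only [Function.comp_apply, sAdSVolApprox_sqrt_div_four_pi m hA]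
  · filter_upwards [eventually_ge_atTop 0] with A hA
    exact rpow_neg_four_sqrt_div_four_pi hA
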